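/- arXiv:2105.05555 — 4 statements merged into one kernel-verified Lean document; each statement's English description precedes it below -/
import Mathlib

section
/- Let P be a Bayesian network on {0,1}^d with conditional probability table p and parental configuration probabilities π^P. For X ∼ P, the covariance matrix of f(X,p) is the diagonal matrix diag(π^P ∘ p ∘ (1−p)). -/
open Finset

/-- The index set of the conditional probability table: pairs `(i, a)` where
`a` is an assignment of Boolean values to the parents of node `i`. -/
abbrev BNConf {d : ℕ} (parent : Fin d → Finset (Fin d)) : Type :=
  (i : Fin d) × ({j // j ∈ parent i} → Bool)

/-- The parental configuration of node `i` realized by the sample `x`. -/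
def bnRestrict {d : ℕ} (parent : Fin d → Finset (Fin d)) (x : Fin d → Bool)
    (i : Fin d) : {j // j ∈ parent i} → Bool :=
  fun j => x j.1

/-- The probability that a Bayesian network with structure `parent` and
conditional probability table `p` assigns to the outcome `x ∈ {0,1}^d`. -/
def bnWeight {d : ℕ} (parent : Fin d → Finset (Fin d))
    (p : BNConf parent → ℝ) (x : Fin d → Bool) : ℝ :=
  ∏ i : Fin d,
    (if x i then p ⟨i, bnRestrict parent x i⟩ else 1 - p ⟨i, bnRestrict parent x i⟩)

/-- The expanded vector `f(x, p)`. -/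
def bnF {d : ℕ} (parent : Fin d → Finset (Fin d)) (p : BNConf parent → ℝ)
    (x : Fin d → Bool) (k : BNConf parent) : ℝ :=
  if bnRestrict parent x k.1 = k.2 then (if x k.1 then 1 else 0) - p k else 0

/-- The parental configuration probabilities `π^P`. -/
def bnPi {d : ℕ} (parent : Fin d → Finset (Fin d)) (p : BNConf parent → ℝ)
    (k : BNConf parent) : ℝ :=
  ∑ x : Fin d → Bool,
    if bnRestrict parent x k.1 = k.2 then bnWeight parent p x else 0

/-!
In a topological order, the factor of node `i` sums to one over the value of `X i`, so the
nodes after `i` can be summed out one at a time. This yields the tower property: if `G`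
depends only on `(X j)_{j ≤ i}`, then `E[G(X)] = E[p G(X[i ↦ 1]) + (1 - p) G(X[i ↦ 0])]` with
`p = p_{i, Π_i(X)}`. Given its parents, `f_k` with `k = (i, a)` is centred, so
`E[f_k(X) h(X)] = 0` whenever `h` depends only on `(X j)_{j < i}`: this kills the means and
the entries between different nodes. Two configurations of the same node are disjoint events,
and on the diagonal the conditional variance of `f_k` is `p_k (1 - p_k)` on the event `Π_k`,
of probability `π_k`.
-/

open Function

theorem two_mul_sum_eq_sum_update {ι R : Type*} [Fintype ι] [DecidableEq ι] [CommSemiring R]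
    (s : ι) (H : (ι → Bool) → R) :
    2 * ∑ x, H x = ∑ x, (H (update x s false) + H (update x s true)) := by
  set e := Equiv.funSplitAt s Bool
  have he : ∀ (b : Bool) (y : Bool × ({j // j ≠ s} → Bool)),
      update (e.symm y) s b = e.symm (b, y.2) := by
    intro b y
    funext j
    rcases eq_or_ne j s with rfl | hj
    · simp [e, Equiv.funSplitAt]
    · simp [e, Equiv.funSplitAt, hj]
  rw [← e.symm.sum_comp, ← e.symm.sum_comp]
  simp only [he, Fintype.sum_prod_type, Fintype.sum_bool, Finset.sum_add_distrib]
  ring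

section DependsOnBelow

variable {d : ℕ} {β : Type*}

def DependsOnBelow (t : ℕ) (G : (Fin d → Bool) → β) : Prop :=
  ∀ s : Fin d, t ≤ s → ∀ x b, G (update x s b) = G x

theorem DependsOnBelow.mono {t t' : ℕ} {G : (Fin d → Bool) → β} (hG : DependsOnBelow t G)
    (htt' : t ≤ t') : DependsOnBelow t' G :=
  fun s hs => hG s (htt'.trans hs)

theorem DependsOnBelow.mul [Mul β] {t : ℕ} {G H : (Fin d → Bool) → β} (hG : DependsOnBelow t G)
    (hH : DependsOnBelow t H) : DependsOnBelow t (fun x => G x * H x) :=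
  fun s hs x b => by simp only [hG s hs, hH s hs]

end DependsOnBelow

section BayesianNetwork

variable {d : ℕ} {parent : Fin d → Finset (Fin d)}

theorem bnRestrict_dependsOnBelow (htopo : ∀ i : Fin d, ∀ j ∈ parent i, (j : ℕ) < i)
    (i : Fin d) : DependsOnBelow i (fun x => bnRestrict parent x i) := by
  intro s hs x b
  funext j
  exact update_of_ne (fun hjs => (htopo i s (by rw [← hjs]; exact j.2)).not_ge hs) _ _

theorem bnRestrict_update_self (htopo : ∀ i : Fin d, ∀ j ∈ parent i, (j : ℕ) < i)
    (i : Fin d) (x : Fin d → Bool) (b : Bool) :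
    bnRestrict parent (update x i b) i = bnRestrict parent x i :=
  bnRestrict_dependsOnBelow htopo i i le_rfl x b

variable (parent) in
def bnFac (p : BNConf parent → ℝ) (x : Fin d → Bool) (m : Fin d) : ℝ :=
  if x m then p ⟨m, bnRestrict parent x m⟩ else 1 - p ⟨m, bnRestrict parent x m⟩

variable (parent) in
def bnPartialWeight (p : BNConf parent → ℝ) (t : ℕ) (x : Fin d → Bool) : ℝ :=
  ∏ m ∈ univ.filter (fun m : Fin d => (m : ℕ) < t), bnFac parent p x m

theorem bnPartialWeight_self (p : BNConf parent → ℝ) :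
    bnPartialWeight parent p d = bnWeight parent p := by
  funext x
  simp [bnPartialWeight, bnWeight, bnFac]

theorem bnPartialWeight_succ (p : BNConf parent → ℝ) (i : Fin d) (x : Fin d → Bool) :
    bnPartialWeight parent p (i + 1) x = bnFac parent p x i * bnPartialWeight parent p i x := by
  have hfilter : univ.filter (fun m : Fin d => (m : ℕ) < i + 1) =
      insert i (univ.filter fun m : Fin d => (m : ℕ) < i) := by
    ext m
    simp only [mem_filter, mem_univ, true_and, mem_insert, Fin.ext_iff]
    omega
  rw [bnPartialWeight, hfilter, prod_insert (by simp), bnPartialWeight]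

theorem bnFac_dependsOnBelow (htopo : ∀ i : Fin d, ∀ j ∈ parent i, (j : ℕ) < i)
    (p : BNConf parent → ℝ) (m : Fin d) :
    DependsOnBelow (m + 1) (fun x => bnFac parent p x m) := by
  intro s hs x b
  have hsm : m ≠ s := Fin.ne_of_val_ne (by omega)
  simp only [bnFac, update_of_ne hsm,
    bnRestrict_dependsOnBelow htopo m s (by omega) x b]

theorem bnFac_update_self (htopo : ∀ i : Fin d, ∀ j ∈ parent i, (j : ℕ) < i)
    (p : BNConf parent → ℝ) (i : Fin d) (x : Fin d → Bool) (b : Bool) :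
    bnFac parent p (update x i b) i =
      if b then p ⟨i, bnRestrict parent x i⟩ else 1 - p ⟨i, bnRestrict parent x i⟩ := by
  rw [bnFac, update_self, bnRestrict_update_self htopo]

theorem bnPartialWeight_dependsOnBelow (htopo : ∀ i : Fin d, ∀ j ∈ parent i, (j : ℕ) < i)
    (p : BNConf parent → ℝ) (t : ℕ) :
    DependsOnBelow t (bnPartialWeight parent p t) := by
  intro s hs x b
  refine prod_congr rfl fun m hm => ?_
  exact bnFac_dependsOnBelow htopo p m s (by simp at hm; omega) x b

theorem bnF_dependsOnBelow (htopo : ∀ i : Fin d, ∀ j ∈ parent i, (j : ℕ) < i)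
    (p : BNConf parent → ℝ) (k : BNConf parent) :
    DependsOnBelow (k.1 + 1) (fun x => bnF parent p x k) := by
  intro s hs x b
  have hsk : k.1 ≠ s := Fin.ne_of_val_ne (by omega)
  simp only [bnF, update_of_ne hsk,
    bnRestrict_dependsOnBelow htopo k.1 s (by omega) x b]

theorem bnF_update_self (htopo : ∀ i : Fin d, ∀ j ∈ parent i, (j : ℕ) < i)
    (p : BNConf parent → ℝ) (i : Fin d) (a : {j // j ∈ parent i} → Bool)
    (x : Fin d → Bool) (b : Bool) :
    bnF parent p (update x i b) ⟨i, a⟩ =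
      if bnRestrict parent x i = a then (if b then 1 else 0) - p ⟨i, a⟩ else 0 := by
  rw [bnF, update_self, bnRestrict_update_self htopo]

variable (parent) in
/-- The conditional expectation of `G(X)` given `(X j)_{j < i}`, for `G` depending only on
`(X j)_{j ≤ i}`. -/
def bnCondExp (p : BNConf parent → ℝ) (i : Fin d) (G : (Fin d → Bool) → ℝ)
    (x : Fin d → Bool) : ℝ :=
  p ⟨i, bnRestrict parent x i⟩ * G (update x i true) +
    (1 - p ⟨i, bnRestrict parent x i⟩) * G (update x i false)

theorem bnCondExp_dependsOnBelow (htopo : ∀ i : Fin d, ∀ j ∈ parent i, (j : ℕ) < i)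
    (p : BNConf parent → ℝ) (i : Fin d) {G : (Fin d → Bool) → ℝ}
    (hG : DependsOnBelow (i + 1) G) : DependsOnBelow i (bnCondExp parent p i G) := by
  intro s hs x b
  have hupdate : ∀ c, G (update (update x s b) i c) = G (update x i c) := by
    intro c
    rcases eq_or_ne s i with rfl | hsi
    · rw [update_idem]
    · rw [update_comm hsi, hG s (by omega)]
  simp only [bnCondExp, hupdate, bnRestrict_dependsOnBelow htopo i s hs x b]

theorem bnCondExp_eq_self (p : BNConf parent → ℝ) {i : Fin d} {G : (Fin d → Bool) → ℝ}
    (hG : DependsOnBelow i G) : bnCondExp parent p i G = G := by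
  funext x
  rw [bnCondExp, hG i le_rfl, hG i le_rfl]
  ring

theorem two_mul_sum_bnPartialWeight_succ (htopo : ∀ i : Fin d, ∀ j ∈ parent i, (j : ℕ) < i)
    (p : BNConf parent → ℝ) (i : Fin d) (G : (Fin d → Bool) → ℝ) :
    2 * ∑ x, bnPartialWeight parent p (i + 1) x * G x =
      ∑ x, bnPartialWeight parent p i x * bnCondExp parent p i G x := by
  rw [two_mul_sum_eq_sum_update i]
  refine sum_congr rfl fun x _ => ?_
  simp only [bnPartialWeight_succ, bnFac_update_self htopo, bnCondExp,
    bnPartialWeight_dependsOnBelow htopo p i i le_rfl, Bool.false_eq_true, if_false, if_true]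
  ring

/-- The sums run over all of `{0,1}^d`, so every summed-out node contributes a factor `2`. -/
theorem two_pow_mul_sum_bnWeight (htopo : ∀ i : Fin d, ∀ j ∈ parent i, (j : ℕ) < i)
    (p : BNConf parent → ℝ) {t : ℕ} (ht : t ≤ d) {G : (Fin d → Bool) → ℝ}
    (hG : DependsOnBelow t G) :
    2 ^ (d - t) * ∑ x, bnWeight parent p x * G x =
      ∑ x, bnPartialWeight parent p t x * G x := by
  induction ht using Nat.decreasingInduction generalizing G with
  | self => simp [bnPartialWeight_self]
  | of_succ t htd ih =>
    obtain ⟨i, rfl⟩ : ∃ i : Fin d, (i : ℕ) = t := ⟨⟨t, htd⟩, rfl⟩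
    calc 2 ^ (d - i) * ∑ x, bnWeight parent p x * G x
        = 2 * (2 ^ (d - (i + 1)) * ∑ x, bnWeight parent p x * G x) := by
          rw [show d - i = d - (i + 1) + 1 by omega, pow_succ]; ring
      _ = ∑ x, bnPartialWeight parent p i x * bnCondExp parent p i G x := by
          rw [ih (hG.mono (by omega)), two_mul_sum_bnPartialWeight_succ htopo]
      _ = ∑ x, bnPartialWeight parent p i x * G x := by
          rw [bnCondExp_eq_self p hG]

theorem sum_bnWeight_mul_bnCondExp (htopo : ∀ i : Fin d, ∀ j ∈ parent i, (j : ℕ) < i)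
    (p : BNConf parent → ℝ) (i : Fin d) {G : (Fin d → Bool) → ℝ}
    (hG : DependsOnBelow (i + 1) G) :
    ∑ x, bnWeight parent p x * bnCondExp parent p i G x = ∑ x, bnWeight parent p x * G x := by
  have hpow : (2 : ℝ) ^ (d - i) = 2 * 2 ^ (d - (i + 1)) := by
    rw [← pow_succ']
    congr 1
    omega
  have hstep := two_mul_sum_bnPartialWeight_succ htopo p i G
  rw [← two_pow_mul_sum_bnWeight htopo p i.isLt hG,
    ← two_pow_mul_sum_bnWeight htopo p i.isLt.le (bnCondExp_dependsOnBelow htopo p i hG),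
    hpow, mul_assoc] at hstep
  exact (mul_left_cancel₀ (by positivity) (mul_left_cancel₀ two_ne_zero hstep)).symm

theorem bnCondExp_bnF_mul_eq_zero (htopo : ∀ i : Fin d, ∀ j ∈ parent i, (j : ℕ) < i)
    (p : BNConf parent → ℝ) (k : BNConf parent) {h : (Fin d → Bool) → ℝ}
    (hh : DependsOnBelow k.1 h) :
    bnCondExp parent p k.1 (fun x => bnF parent p x k * h x) = 0 := by
  obtain ⟨i, a⟩ := k
  funext x
  simp only [bnCondExp, bnF_update_self htopo, hh i le_rfl, Pi.zero_apply]
  by_cases ha : bnRestrict parent x i = a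
  · subst ha
    simp only [↓reduceIte, Bool.false_eq_true]
    ring
  · simp [ha]

theorem bnCondExp_bnF_mul_self (htopo : ∀ i : Fin d, ∀ j ∈ parent i, (j : ℕ) < i)
    (p : BNConf parent → ℝ) (k : BNConf parent) :
    bnCondExp parent p k.1 (fun x => bnF parent p x k * bnF parent p x k) =
      fun x => if bnRestrict parent x k.1 = k.2 then p k * (1 - p k) else 0 := by
  obtain ⟨i, a⟩ := k
  funext x
  simp only [bnCondExp, bnF_update_self htopo]
  by_cases ha : bnRestrict parent x i = a
  · subst ha
    simp only [↓reduceIte, Bool.false_eq_true]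
    ring
  · simp [ha]

theorem sum_bnWeight_mul_bnF_mul_eq_zero (htopo : ∀ i : Fin d, ∀ j ∈ parent i, (j : ℕ) < i)
    (p : BNConf parent → ℝ) (k : BNConf parent) {h : (Fin d → Bool) → ℝ}
    (hh : DependsOnBelow k.1 h) :
    ∑ x, bnWeight parent p x * (bnF parent p x k * h x) = 0 := by
  rw [← sum_bnWeight_mul_bnCondExp htopo p k.1
      ((bnF_dependsOnBelow htopo p k).mul (hh.mono k.1.val.le_succ)),
    bnCondExp_bnF_mul_eq_zero htopo p k hh]
  simp

theorem sum_bnWeight_mul_bnF (htopo : ∀ i : Fin d, ∀ j ∈ parent i, (j : ℕ) < i)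
    (p : BNConf parent → ℝ) (k : BNConf parent) :
    ∑ x, bnWeight parent p x * bnF parent p x k = 0 := by
  simpa using sum_bnWeight_mul_bnF_mul_eq_zero htopo p k (h := fun _ => 1) fun _ _ _ _ => rfl

theorem sum_bnWeight_mul_bnF_mul_self (htopo : ∀ i : Fin d, ∀ j ∈ parent i, (j : ℕ) < i)
    (p : BNConf parent → ℝ) (k : BNConf parent) :
    ∑ x, bnWeight parent p x * (bnF parent p x k * bnF parent p x k) =
      bnPi parent p k * (p k * (1 - p k)) := by
  have hF := bnF_dependsOnBelow htopo p k
  rw [← sum_bnWeight_mul_bnCondExp htopo p k.1 (hF.mul hF), bnCondExp_bnF_mul_self htopo,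
    bnPi, sum_mul]
  refine sum_congr rfl fun x _ => ?_
  by_cases hx : bnRestrict parent x k.1 = k.2 <;> simp [hx]

theorem bnF_mul_bnF_of_fst_eq_of_ne (p : BNConf parent → ℝ) {k l : BNConf parent}
    (hfst : k.1 = l.1) (hkl : k ≠ l) (x : Fin d → Bool) :
    bnF parent p x k * bnF parent p x l = 0 := by
  obtain ⟨i, a⟩ := k
  obtain ⟨j, b⟩ := l
  obtain rfl : i = j := hfst
  have hab : a ≠ b := fun h => hkl (h ▸ rfl)
  unfold bnF
  by_cases ha : bnRestrict parent x i = a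
  · rw [if_neg fun hb => hab (ha.symm.trans hb), mul_zero]
  · rw [if_neg ha, zero_mul]

theorem sum_bnWeight_mul_bnF_mul_bnF_of_lt (htopo : ∀ i : Fin d, ∀ j ∈ parent i, (j : ℕ) < i)
    (p : BNConf parent → ℝ) {k l : BNConf parent} (hlk : (l.1 : ℕ) < k.1) :
    ∑ x, bnWeight parent p x * (bnF parent p x k * bnF parent p x l) = 0 :=
  sum_bnWeight_mul_bnF_mul_eq_zero htopo p k ((bnF_dependsOnBelow htopo p l).mono hlk)

theorem sum_bnWeight_mul_bnF_mul_bnF_of_ne (htopo : ∀ i : Fin d, ∀ j ∈ parent i, (j : ℕ) < i)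
    (p : BNConf parent → ℝ) {k l : BNConf parent} (hkl : k ≠ l) :
    ∑ x, bnWeight parent p x * (bnF parent p x k * bnF parent p x l) = 0 := by
  rcases lt_trichotomy (l.1 : ℕ) k.1 with hlk | hlk | hkl'
  · exact sum_bnWeight_mul_bnF_mul_bnF_of_lt htopo p hlk
  · simp [bnF_mul_bnF_of_fst_eq_of_ne p (Fin.ext hlk).symm hkl]
  · simp_rw [mul_comm (bnF parent p _ k)]
    exact sum_bnWeight_mul_bnF_mul_bnF_of_lt htopo p hkl'

end BayesianNetwork

theorem bn_f_cov_diagonal_general (d : ℕ) (parent : Fin d → Finset (Fin d))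
    (htopo : ∀ i : Fin d, ∀ j ∈ parent i, (j : ℕ) < (i : ℕ))
    (p : BNConf parent → ℝ) :
    (Matrix.of fun k l : BNConf parent =>
        (∑ x : Fin d → Bool,
            bnWeight parent p x * bnF parent p x k * bnF parent p x l) -
          (∑ x : Fin d → Bool, bnWeight parent p x * bnF parent p x k) *
            (∑ x : Fin d → Bool, bnWeight parent p x * bnF parent p x l)) =
      Matrix.diagonal (fun k => bnPi parent p k * p k * (1 - p k)) := by
  ext k l
  simp only [Matrix.of_apply, sum_bnWeight_mul_bnF htopo, mul_zero, sub_zero, mul_assoc]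
  rcases eq_or_ne k l with rfl | hkl
  · rw [Matrix.diagonal_apply_eq, sum_bnWeight_mul_bnF_mul_self htopo]
  · rw [Matrix.diagonal_apply_ne _ hkl, sum_bnWeight_mul_bnF_mul_bnF_of_ne htopo p hkl]

/-- For a Bayesian network `P` on `{0,1}^d` with conditional probability table
`p` and parental configuration probabilities `π^P`, the covariance matrix of
`f(X, p)` (for `X ∼ P`) equals the diagonal matrix
`diag(π^P ∘ p ∘ (1 - p))`. -/
theorem bn_f_cov_diagonal (d : ℕ) (parent : Fin d → Finset (Fin d))
    (htopo : ∀ i : Fin d, ∀ j ∈ parent i, (j : ℕ) < (i : ℕ))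
    (p : BNConf parent → ℝ) (hp : ∀ k, 0 ≤ p k ∧ p k ≤ 1) :
    (Matrix.of fun k l : BNConf parent =>
        (∑ x : Fin d → Bool,
            bnWeight parent p x * bnF parent p x k * bnF parent p x l) -
          (∑ x : Fin d → Bool, bnWeight parent p x * bnF parent p x k) *
            (∑ x : Fin d → Bool, bnWeight parent p x * bnF parent p x l)) =
      Matrix.diagonal (fun k => bnPi parent p k * p k * (1 - p k)) :=
  bn_f_cov_diagonal_general d parent htopo p
end

section
/- Let S be a finite set of N vectors in ℝ^d with mean μ(S), and suppose S is (ε,β,γ)-stable with respect to a distribution with mean μ: for every T ⊆ S with |T| ≥ (1−2ε)N, ‖(1/|T|)∑_{x∈T}(x−μ)‖₂ ≤ β and ‖(1/|T|)∑_{x∈T}(x−μ)(x−μ)^⊤ − I‖₂ ≤ γ. Then for any subset T ⊆ S with |T| = 2εN, ‖(1/|T|)∑_{x∈T} x − μ‖₂ ≤ β/ε. -/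
open Finset

/-- The spectral norm (operator 2-norm) of a square real matrix. -/
noncomputable def specNorm {n : Type*} [Fintype n] [DecidableEq n]
    (C : Matrix n n ℝ) : ℝ :=
  ‖Matrix.toEuclideanCLM (𝕜 := ℝ) C‖

/-- The empirical second-moment matrix of `T`, centered at `μ`. -/
noncomputable def secondMoment {d : ℕ} (T : Finset (EuclideanSpace ℝ (Fin d)))
    (μ : EuclideanSpace ℝ (Fin d)) : Matrix (Fin d) (Fin d) ℝ :=
  (T.card : ℝ)⁻¹ • ∑ x ∈ T, Matrix.vecMulVec (fun i => x i - μ i) (fun i => x i - μ i)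

/-! Writing `∑_T = ∑_S − ∑_{S∖T}`, both sums on the right are controlled by stability, since `S`
and `S ∖ T` are large. This bounds `‖∑_{x∈T} (x − μ)‖` by `(|S| + |S ∖ T|) β = (2 − 2ε) |S| β`,
and dividing by `|T| = 2ε|S|` gives `(1 − ε) β / ε ≤ β / ε`. -/

section

variable {ι E : Type*} [SeminormedAddCommGroup E]

theorem norm_sum_le_norm_sum_add_norm_sum_sdiff [DecidableEq ι] {S T : Finset ι} (hTS : T ⊆ S)
    (f : ι → E) : ‖∑ x ∈ T, f x‖ ≤ ‖∑ x ∈ S, f x‖ + ‖∑ x ∈ S \ T, f x‖ := by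
  rw [← sub_sub_cancel (∑ x ∈ S, f x) (∑ x ∈ T, f x), ← sum_sdiff_eq_sub hTS]
  exact norm_sub_le _ _

theorem norm_sum_le_card_mul_of_norm_inv_card_smul_sum_le [NormedSpace ℝ E] {T : Finset ι}
    {f : ι → E} {β : ℝ} (h : ‖(#T : ℝ)⁻¹ • ∑ x ∈ T, f x‖ ≤ β) :
    ‖∑ x ∈ T, f x‖ ≤ #T * β := by
  rcases T.eq_empty_or_nonempty with rfl | hT
  · simp
  have hT : (0 : ℝ) < #T := by exact_mod_cast hT.card_pos
  rw [norm_smul, norm_inv, Real.norm_natCast, inv_mul_le_iff₀ hT] at h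
  exact h

end

theorem inv_card_smul_sum_sub_eq {E : Type*} [AddCommGroup E] [Module ℝ E] {T : Finset E}
    (hT : T.Nonempty) (μ : E) :
    (#T : ℝ)⁻¹ • ∑ x ∈ T, x - μ = (#T : ℝ)⁻¹ • ∑ x ∈ T, (x - μ) := by
  have hT : (#T : ℝ) ≠ 0 := by exact_mod_cast hT.card_ne_zero
  rw [sum_sub_distrib, sum_const, ← Nat.cast_smul_eq_nsmul ℝ, smul_sub, smul_smul,
    inv_mul_cancel₀ hT, one_smul]

theorem stability_small_subset_mean_general (d : ℕ) (ε β γ : ℝ)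
    (hε : 0 < ε)
    (S : Finset (EuclideanSpace ℝ (Fin d))) (hS : 0 < S.card)
    (μ : EuclideanSpace ℝ (Fin d))
    (hstab : ∀ T ⊆ S, (1 - 2 * ε) * (S.card : ℝ) ≤ (T.card : ℝ) →
      ‖(T.card : ℝ)⁻¹ • ∑ x ∈ T, (x - μ)‖ ≤ β ∧
      specNorm (secondMoment T μ - 1) ≤ γ) :
    ∀ T ⊆ S, (T.card : ℝ) = 2 * ε * (S.card : ℝ) →
      ‖((T.card : ℝ)⁻¹ • ∑ x ∈ T, x) - μ‖ ≤ β / ε := by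
  classical
  intro T hTS hT
  have hN : (0 : ℝ) < #S := by exact_mod_cast hS
  have hTpos : (0 : ℝ) < #T := by rw [hT]; positivity
  have hSdiff : (#(S \ T) : ℝ) = #S - #T := cast_card_sdiff hTS
  have hβS := (hstab S subset_rfl (by nlinarith)).1
  have hβSdiff := (hstab (S \ T) sdiff_subset (by rw [hSdiff, hT]; linarith)).1
  have hβ : 0 ≤ β := (norm_nonneg _).trans hβS
  have hsum : ‖∑ x ∈ T, (x - μ)‖ ≤ (#S + #(S \ T)) * β := by
    rw [add_mul]
    exact (norm_sum_le_norm_sum_add_norm_sum_sdiff hTS _).trans (add_le_add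
      (norm_sum_le_card_mul_of_norm_inv_card_smul_sum_le hβS)
      (norm_sum_le_card_mul_of_norm_inv_card_smul_sum_le hβSdiff))
  rw [inv_card_smul_sum_sub_eq (card_pos.mp (by exact_mod_cast hTpos)), norm_smul, norm_inv,
    Real.norm_natCast, inv_mul_le_iff₀ hTpos]
  refine hsum.trans ?_
  rw [hSdiff, hT, mul_div_assoc', le_div_iff₀ hε]
  nlinarith [mul_nonneg (mul_nonneg (mul_nonneg hε.le hε.le) hN.le) hβ]

/-- If `S` is `(ε, β, γ)`-stable with respect to mean `μ`, then for any subset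
`T ⊆ S` with `|T| = 2εN`, the empirical mean of `T` is within `β/ε` of `μ`. -/
theorem stability_small_subset_mean (d : ℕ) (ε β γ : ℝ)
    (hε : 0 < ε) (hε' : ε < 1 / 2)
    (S : Finset (EuclideanSpace ℝ (Fin d))) (hS : 0 < S.card)
    (μ : EuclideanSpace ℝ (Fin d))
    (hstab : ∀ T ⊆ S, (1 - 2 * ε) * (S.card : ℝ) ≤ (T.card : ℝ) →
      ‖(T.card : ℝ)⁻¹ • ∑ x ∈ T, (x - μ)‖ ≤ β ∧
      specNorm (secondMoment T μ - 1) ≤ γ) :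
    ∀ T ⊆ S, (T.card : ℝ) = 2 * ε * (S.card : ℝ) →
      ‖((T.card : ℝ)⁻¹ • ∑ x ∈ T, x) - μ‖ ≤ β / ε :=
  stability_small_subset_mean_general d ε β γ hε S hS μ hstab
end

section
/- Let S be a finite set of N vectors in ℝ^d that is (ε,β,γ)-stable with respect to mean μ (as in Definition of stability). Then for any T ⊆ S with |T| = 2εN, ‖(1/|T|)∑_{x∈T}(x−μ)(x−μ)^⊤ − I‖₂ ≤ γ/ε. -/
/-!
The unnormalized deviation `∑ x ∈ T, ((x - μ)(x - μ)ᵀ - I)` is additive in `T`, so the one of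
`T` is the one of `S` minus the one of `S \ T`. Both `S` and `S \ T` are large enough for
stability to apply, so `|T| ‖M_T - I‖ ≤ (N + (1 - 2ε)N) γ ≤ 2Nγ = |T| γ / ε`.
-/

open Finset

section specNorm

variable {n : Type*} [Fintype n] [DecidableEq n]

lemma specNorm_nonneg (C : Matrix n n ℝ) : 0 ≤ specNorm C :=
  norm_nonneg _

lemma specNorm_smul (c : ℝ) (C : Matrix n n ℝ) : specNorm (c • C) = |c| * specNorm C := by
  rw [specNorm, map_smul, norm_smul, Real.norm_eq_abs, specNorm]

lemma specNorm_sub_le (A B : Matrix n n ℝ) : specNorm (A - B) ≤ specNorm A + specNorm B := by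
  rw [specNorm, map_sub]
  exact norm_sub_le _ _

end specNorm

section secondMoment

variable {d : ℕ}

lemma card_smul_secondMoment_sub_one (T : Finset (EuclideanSpace ℝ (Fin d)))
    (μ : EuclideanSpace ℝ (Fin d)) :
    (T.card : ℝ) • (secondMoment T μ - 1) =
      ∑ x ∈ T, (Matrix.vecMulVec (fun i => x i - μ i) (fun i => x i - μ i) - 1) := by
  rw [sum_sub_distrib, sum_const, smul_sub, ← Nat.cast_smul_eq_nsmul ℝ, secondMoment]
  rcases T.eq_empty_or_nonempty with rfl | hT
  · simp
  · rw [smul_inv_smul₀ (by positivity)]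

lemma card_mul_specNorm_secondMoment_sub_one (T : Finset (EuclideanSpace ℝ (Fin d)))
    (μ : EuclideanSpace ℝ (Fin d)) :
    (T.card : ℝ) * specNorm (secondMoment T μ - 1) =
      specNorm (∑ x ∈ T, (Matrix.vecMulVec (fun i => x i - μ i) (fun i => x i - μ i) - 1)) := by
  rw [← card_smul_secondMoment_sub_one, specNorm_smul, abs_of_nonneg (Nat.cast_nonneg _)]

lemma card_mul_specNorm_secondMoment_sub_one_le_of_subset
    {S T : Finset (EuclideanSpace ℝ (Fin d))} (hT : T ⊆ S) (μ : EuclideanSpace ℝ (Fin d))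
    {γ : ℝ} (hS : specNorm (secondMoment S μ - 1) ≤ γ)
    (hST : specNorm (secondMoment (S \ T) μ - 1) ≤ γ) :
    (T.card : ℝ) * specNorm (secondMoment T μ - 1) ≤ ((S.card : ℝ) + (S \ T).card) * γ := by
  set f : EuclideanSpace ℝ (Fin d) → Matrix (Fin d) (Fin d) ℝ :=
    fun x => Matrix.vecMulVec (fun i => x i - μ i) (fun i => x i - μ i) - 1
  have hsplit : ∑ x ∈ T, f x = ∑ x ∈ S, f x - ∑ x ∈ S \ T, f x := by
    rw [← sum_sdiff hT]
    abel
  calc (T.card : ℝ) * specNorm (secondMoment T μ - 1)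
      = specNorm (∑ x ∈ S, f x - ∑ x ∈ S \ T, f x) := by
        rw [card_mul_specNorm_secondMoment_sub_one, hsplit]
    _ ≤ specNorm (∑ x ∈ S, f x) + specNorm (∑ x ∈ S \ T, f x) := specNorm_sub_le _ _
    _ = S.card * specNorm (secondMoment S μ - 1)
          + (S \ T).card * specNorm (secondMoment (S \ T) μ - 1) := by
        rw [card_mul_specNorm_secondMoment_sub_one, card_mul_specNorm_secondMoment_sub_one]
    _ ≤ ((S.card : ℝ) + (S \ T).card) * γ := by
        rw [add_mul]
        gcongr

end secondMoment

theorem stability_small_subset_cov_general (d : ℕ) (ε β γ : ℝ)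
    (hε : 0 < ε)
    (S : Finset (EuclideanSpace ℝ (Fin d))) (hS : 0 < S.card)
    (μ : EuclideanSpace ℝ (Fin d))
    (hstab : ∀ T ⊆ S, (1 - 2 * ε) * (S.card : ℝ) ≤ (T.card : ℝ) →
      ‖(T.card : ℝ)⁻¹ • ∑ x ∈ T, (x - μ)‖ ≤ β ∧
      specNorm (secondMoment T μ - 1) ≤ γ) :
    ∀ T ⊆ S, (T.card : ℝ) = 2 * ε * (S.card : ℝ) →
      specNorm (secondMoment T μ - 1) ≤ γ / ε := by
  intro T hT hcard
  have hN : (0 : ℝ) < S.card := by exact_mod_cast hS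
  have hcompl : ((S \ T).card : ℝ) = (1 - 2 * ε) * S.card := by
    rw [card_sdiff_of_subset hT, Nat.cast_sub (card_le_card hT), hcard]
    ring
  have hγS := (hstab S Subset.rfl (by nlinarith)).2
  have hγST := (hstab (S \ T) sdiff_subset hcompl.ge).2
  have hγ : 0 ≤ γ := (specNorm_nonneg _).trans hγS
  have hbound := card_mul_specNorm_secondMoment_sub_one_le_of_subset hT μ hγS hγST
  rw [hcard, hcompl] at hbound
  rw [le_div_iff₀ hε]
  nlinarith

/-- If `S` is `(ε, β, γ)`-stable with respect to mean `μ`, then for any subset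
`T ⊆ S` with `|T| = 2εN`, the centered empirical second moment of `T` is within
`γ/ε` of the identity in spectral norm. -/
theorem stability_small_subset_cov (d : ℕ) (ε β γ : ℝ)
    (hε : 0 < ε) (hε' : ε < 1 / 2)
    (S : Finset (EuclideanSpace ℝ (Fin d))) (hS : 0 < S.card)
    (μ : EuclideanSpace ℝ (Fin d))
    (hstab : ∀ T ⊆ S, (1 - 2 * ε) * (S.card : ℝ) ≤ (T.card : ℝ) →
      ‖(T.card : ℝ)⁻¹ • ∑ x ∈ T, (x - μ)‖ ≤ β ∧
      specNorm (secondMoment T μ - 1) ≤ γ) :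
    ∀ T ⊆ S, (T.card : ℝ) = 2 * ε * (S.card : ℝ) →
      specNorm (secondMoment T μ - 1) ≤ γ / ε :=
  stability_small_subset_cov_general d ε β γ hε S hS μ hstab
end

section
/- Let S be a set of N points in ℝ^d that is (ε,β,γ)-stable with respect to a distribution with mean μ. Then S is (ε, β, γ, β/ε, γ/ε + 3β²/ε²)-good: in particular, for any T ⊆ S with |T| = 2εN, ‖(1/|T|)∑_{x∈T}(x−μ(S))(x−μ(S))^⊤ − I‖₂ ≤ γ/ε + 3β²/ε², where μ(S) is the empirical mean of S. -/
/-!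
Write `R = S \ T`, so `|R| = (1 - 2ε)N` and both `S` and `R` are covered by stability. For any
empirical mean, `|T| m_T = |S| m_S - |R| m_R`; hence the `μ`-centered mean and second moment of `T`
deviate from `0` and `I` by at most `(2|S| - |T|)/|T| = (1 - ε)/ε` times `β` and `γ`. Recentering
the second moment of `T` at `μ(S)` adds the rank-one terms `-m wᵀ - w mᵀ + w wᵀ`, where `m` is the
`μ`-centered mean of `T` and `w = μ(S) - μ` has norm at most `β` by stability of `S` itself.
-/

open Finset

open scoped Matrix.Norms.L2Operator

noncomputable def empiricalMean {α E : Type*} [AddCommGroup E] [Module ℝ E]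
    (T : Finset α) (f : α → E) : E :=
  (T.card : ℝ)⁻¹ • ∑ x ∈ T, f x

section EmpiricalMean

variable {α E : Type*}

theorem card_smul_empiricalMean [AddCommGroup E] [Module ℝ E] (T : Finset α) (f : α → E) :
    (T.card : ℝ) • empiricalMean T f = ∑ x ∈ T, f x := by
  rcases T.eq_empty_or_nonempty with rfl | hT
  · simp
  · exact smul_inv_smul₀ (Nat.cast_ne_zero.2 hT.card_pos.ne') _

theorem card_smul_empiricalMean_sdiff [AddCommGroup E] [Module ℝ E] [DecidableEq α]
    {S T : Finset α} (hTS : T ⊆ S) (f : α → E) :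
    (T.card : ℝ) • empiricalMean T f =
      (S.card : ℝ) • empiricalMean S f - ((S \ T).card : ℝ) • empiricalMean (S \ T) f := by
  simp only [card_smul_empiricalMean, sum_sdiff_eq_sub hTS, sub_sub_cancel]

theorem empiricalMean_sub_const [AddCommGroup E] [Module ℝ E] {T : Finset α} (hT : T.Nonempty)
    (f : α → E) (c : E) :
    empiricalMean T f - c = empiricalMean T (fun x => f x - c) := by
  rw [empiricalMean, empiricalMean, sum_sub_distrib, sum_const, smul_sub,
    ← Nat.cast_smul_eq_nsmul ℝ, inv_smul_smul₀ (Nat.cast_ne_zero.2 hT.card_pos.ne')]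

theorem norm_sub_le_of_smul_eq_sub_smul [SeminormedAddCommGroup E] [NormedSpace ℝ E]
    {t r c : ℝ} {u v w y : E} (ht : 0 < t) (hr : 0 ≤ r)
    (h : t • u = (t + r) • v - r • w) (hv : ‖v - y‖ ≤ c) (hw : ‖w - y‖ ≤ c) :
    ‖u - y‖ ≤ (t + 2 * r) / t * c := by
  have hsplit : t • (u - y) = (t + r) • (v - y) - r • (w - y) := by
    rw [smul_sub, h]; module
  have hc : 0 ≤ c := (norm_nonneg _).trans hv
  have hnorm : t * ‖u - y‖ ≤ (t + 2 * r) * c :=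
    calc t * ‖u - y‖ = ‖(t + r) • (v - y) - r • (w - y)‖ := by
          rw [← hsplit, norm_smul, Real.norm_of_nonneg ht.le]
      _ ≤ (t + r) * c + r * c := by
          refine (norm_sub_le _ _).trans (add_le_add ?_ ?_) <;>
            rw [norm_smul, Real.norm_of_nonneg (by positivity)] <;> gcongr
      _ = (t + 2 * r) * c := by ring
  rwa [div_mul_eq_mul_div, le_div_iff₀ ht, mul_comm]

theorem norm_empiricalMean_sub_le_of_subset [SeminormedAddCommGroup E] [NormedSpace ℝ E]
    [DecidableEq α] {S T : Finset α} (hTS : T ⊆ S) (hT : T.Nonempty) {f : α → E} {y : E}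
    {c : ℝ} (hS : ‖empiricalMean S f - y‖ ≤ c) (hR : ‖empiricalMean (S \ T) f - y‖ ≤ c) :
    ‖empiricalMean T f - y‖ ≤ (2 * S.card - T.card) / T.card * c := by
  have hcard : (S.card : ℝ) = T.card + (S \ T).card := by
    rw [add_comm]; exact_mod_cast (card_sdiff_add_card_eq_card hTS).symm
  have hsplit := card_smul_empiricalMean_sdiff hTS f
  rw [hcard] at hsplit ⊢
  convert norm_sub_le_of_smul_eq_sub_smul (Nat.cast_pos.2 hT.card_pos) (Nat.cast_nonneg _)
    hsplit hS hR using 3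
  ring

end EmpiricalMean

theorem specNorm_eq_l2_opNorm {n : Type*} [Fintype n] [DecidableEq n] (C : Matrix n n ℝ) :
    specNorm C = ‖C‖ := rfl

theorem Matrix.l2_opNorm_vecMulVec {n : Type*} [Fintype n] [DecidableEq n]
    (x y : EuclideanSpace ℝ n) : ‖Matrix.vecMulVec x y‖ = ‖x‖ * ‖y‖ := by
  have h := InnerProductSpace.symm_toEuclideanLin_rankOne x y
  rw [star_trivial] at h
  have hCLM : Matrix.toEuclideanCLM (𝕜 := ℝ) (Matrix.vecMulVec x y) =
      InnerProductSpace.rankOne ℝ x y := by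
    ext z : 1
    rw [← h]
    exact congrArg (fun f : _ →ₗ[ℝ] _ => f z) (Matrix.toEuclideanLin.apply_symm_apply _)
  rw [Matrix.cstar_norm_def, hCLM, InnerProductSpace.norm_rankOne]

section SecondMoment

variable {d : ℕ} {T : Finset (EuclideanSpace ℝ (Fin d))}

theorem secondMoment_eq_of_nonempty (hT : T.Nonempty) (c μ : EuclideanSpace ℝ (Fin d)) :
    secondMoment T c = secondMoment T μ
      - Matrix.vecMulVec (empiricalMean T (· - μ) : EuclideanSpace ℝ (Fin d)) (c - μ)
      - Matrix.vecMulVec (c - μ) (empiricalMean T (· - μ) : EuclideanSpace ℝ (Fin d))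
      + Matrix.vecMulVec (c - μ) (c - μ) := by
  have hT0 : (T.card : ℝ) ≠ 0 := Nat.cast_ne_zero.2 hT.card_pos.ne'
  ext i j
  have expand : ∀ x : EuclideanSpace ℝ (Fin d), (x i - c i) * (x j - c j) =
      (x i - μ i) * (x j - μ j) - (x i - μ i) * (c j - μ j) - (c i - μ i) * (x j - μ j)
        + (c i - μ i) * (c j - μ j) := fun x => by ring
  simp only [secondMoment, empiricalMean, Matrix.sub_apply, Matrix.add_apply, Matrix.smul_apply,
    Matrix.sum_apply, Matrix.vecMulVec_apply, WithLp.ofLp_smul, WithLp.ofLp_sum, WithLp.ofLp_sub,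
    Pi.smul_apply, Finset.sum_apply, Pi.sub_apply, smul_eq_mul]
  rw [sum_congr rfl fun x _ => expand x]
  simp only [sum_add_distrib, sum_sub_distrib, ← sum_mul, ← mul_sum, sum_const, nsmul_eq_mul]
  field_simp

theorem norm_secondMoment_sub_one_le_recenter (hT : T.Nonempty) (c μ : EuclideanSpace ℝ (Fin d)) :
    ‖secondMoment T c - 1‖ ≤
      ‖secondMoment T μ - 1‖ + 2 * ‖empiricalMean T (· - μ)‖ * ‖c - μ‖ + ‖c - μ‖ ^ 2 := by
  rw [secondMoment_eq_of_nonempty hT c μ]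
  generalize (empiricalMean T (· - μ) : EuclideanSpace ℝ (Fin d)) = m
  generalize secondMoment T μ = M
  generalize c - μ = w
  calc ‖M - Matrix.vecMulVec m w - Matrix.vecMulVec w m + Matrix.vecMulVec w w - 1‖
      = ‖(M - 1) - Matrix.vecMulVec m w - Matrix.vecMulVec w m + Matrix.vecMulVec w w‖ := by
        congr 1; abel
    _ ≤ ‖M - 1‖ + ‖Matrix.vecMulVec m w‖ + ‖Matrix.vecMulVec w m‖ + ‖Matrix.vecMulVec w w‖ :=
        norm_add_le_of_le (norm_sub_le_of_le (norm_sub_le _ _) le_rfl) le_rfl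
    _ = ‖M - 1‖ + 2 * ‖m‖ * ‖w‖ + ‖w‖ ^ 2 := by
        simp only [Matrix.l2_opNorm_vecMulVec]; ring

end SecondMoment

theorem one_sub_div_mul_add_le {ε β γ : ℝ} (hε : 0 < ε) (hγ : 0 ≤ γ) :
    (1 - ε) / ε * γ + 2 * ((1 - ε) / ε * β) * β + β ^ 2 ≤ γ / ε + 3 * β ^ 2 / ε ^ 2 := by
  have hγε : (1 - ε) / ε * γ ≤ γ / ε := by
    rw [div_mul_eq_mul_div]; gcongr; nlinarith
  have hβε : 2 * ((1 - ε) / ε * β) * β + β ^ 2 ≤ 3 * β ^ 2 / ε ^ 2 :=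
    calc 2 * ((1 - ε) / ε * β) * β + β ^ 2 = (2 - ε) * ε * β ^ 2 / ε ^ 2 := by
          field_simp; ring
      _ ≤ 3 * β ^ 2 / ε ^ 2 := by gcongr; nlinarith [sq_nonneg (1 - ε)]
  linarith

theorem stability_implies_good_general (d : ℕ) (ε β γ : ℝ)
    (hε : 0 < ε)
    (S : Finset (EuclideanSpace ℝ (Fin d))) (hS : 0 < S.card)
    (μ : EuclideanSpace ℝ (Fin d))
    (hstab : ∀ T ⊆ S, (1 - 2 * ε) * (S.card : ℝ) ≤ (T.card : ℝ) →
      ‖(T.card : ℝ)⁻¹ • ∑ x ∈ T, (x - μ)‖ ≤ β ∧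
      specNorm (secondMoment T μ - 1) ≤ γ) :
    ∀ T ⊆ S, (T.card : ℝ) = 2 * ε * (S.card : ℝ) →
      specNorm (secondMoment T ((S.card : ℝ)⁻¹ • ∑ x ∈ S, x) - 1) ≤
        γ / ε + 3 * β ^ 2 / ε ^ 2 := by
  intro T hTS hT
  simp only [specNorm_eq_l2_opNorm] at hstab ⊢
  have hN : (0 : ℝ) < S.card := Nat.cast_pos.2 hS
  have hT0 : (0 : ℝ) < T.card := by rw [hT]; positivity
  have hTne : T.Nonempty := card_pos.1 (Nat.cast_pos.1 hT0)
  have hR : ((S \ T).card : ℝ) = (1 - 2 * ε) * S.card := by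
    rw [card_sdiff_of_subset hTS, Nat.cast_sub (card_le_card hTS), hT]; ring
  obtain ⟨hβS, hγS⟩ := hstab S subset_rfl (by nlinarith)
  obtain ⟨hβR, hγR⟩ := hstab (S \ T) sdiff_subset hR.ge
  have hk : (2 * S.card - T.card) / T.card = (1 - ε) / ε := by
    rw [hT]; field_simp
  have hβT : ‖empiricalMean T (· - μ)‖ ≤ (1 - ε) / ε * β := by
    have h := norm_empiricalMean_sub_le_of_subset (f := (· - μ)) (y := 0) (c := β) hTS hTne
      (by rwa [sub_zero]) (by rwa [sub_zero])
    rwa [sub_zero, hk] at h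
  have hγT : ‖secondMoment T μ - 1‖ ≤ (1 - ε) / ε * γ :=
    hk ▸ norm_empiricalMean_sub_le_of_subset hTS hTne hγS hγR
  have hμS : ‖(S.card : ℝ)⁻¹ • ∑ x ∈ S, x - μ‖ ≤ β :=
    (congrArg norm (empiricalMean_sub_const (card_pos.1 hS) (fun x => x) μ)).trans_le hβS
  have hβ : 0 ≤ β := (norm_nonneg _).trans hβS
  have hε1 : 0 ≤ (1 - ε) / ε :=
    hk ▸ div_nonneg (by linarith [Nat.cast_le (α := ℝ).2 (card_le_card hTS)]) hT0.le
  calc ‖secondMoment T ((S.card : ℝ)⁻¹ • ∑ x ∈ S, x) - 1‖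
      ≤ ‖secondMoment T μ - 1‖ + 2 * ‖empiricalMean T (· - μ)‖ * ‖(S.card : ℝ)⁻¹ • ∑ x ∈ S, x - μ‖
        + ‖(S.card : ℝ)⁻¹ • ∑ x ∈ S, x - μ‖ ^ 2 :=
        norm_secondMoment_sub_one_le_recenter hTne _ μ
    _ ≤ (1 - ε) / ε * γ + 2 * ((1 - ε) / ε * β) * β + β ^ 2 := by gcongr
    _ ≤ γ / ε + 3 * β ^ 2 / ε ^ 2 := one_sub_div_mul_add_le hε ((norm_nonneg _).trans hγS)

/-- If `S` is `(ε, β, γ)`-stable with respect to mean `μ`, then `S` is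
`(ε, β, γ, β/ε, γ/ε + 3β²/ε²)`-good: for any subset `T ⊆ S` with `|T| = 2εN`,
the empirical second moment of `T` centered at the empirical mean `μ(S)` of
`S` is within `γ/ε + 3β²/ε²` of the identity in spectral norm. -/
theorem stability_implies_good (d : ℕ) (ε β γ : ℝ)
    (hε : 0 < ε) (hε' : ε < 1 / 2)
    (S : Finset (EuclideanSpace ℝ (Fin d))) (hS : 0 < S.card)
    (μ : EuclideanSpace ℝ (Fin d))
    (hstab : ∀ T ⊆ S, (1 - 2 * ε) * (S.card : ℝ) ≤ (T.card : ℝ) →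
      ‖(T.card : ℝ)⁻¹ • ∑ x ∈ T, (x - μ)‖ ≤ β ∧
      specNorm (secondMoment T μ - 1) ≤ γ) :
    ∀ T ⊆ S, (T.card : ℝ) = 2 * ε * (S.card : ℝ) →
      specNorm (secondMoment T ((S.card : ℝ)⁻¹ • ∑ x ∈ S, x) - 1) ≤
        γ / ε + 3 * β ^ 2 / ε ^ 2 :=
  stability_implies_good_general d ε β γ hε S hS μ hstab
end
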